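/- arXiv:1405.3030 — 2 statements merged into one kernel-verified Lean document; each statement's English description precedes it below -/
import Mathlib

section
/- Let q be a prime power, f ≥ 2, K = GF(q), V = K^f, and assume q^{f−1} ≥ 3. Let P = V and let B be the set of affine hyperplanes of V (the cosets v + W where W is an (f−1)-dimensional K-subspace of V), with membership as incidence. Let G be any group of permutations of V that maps affine hyperplanes to affine hyperplanes and contains every translation x ↦ x + v (v ∈ V) and every linear map x ↦ Ax with A ∈ SL(f,q). Then D = (P,B,∈) is a non-trivial 2-(q^f, q^{f−1}, (q^{f−1}−1)/(q−1)) design, any two distinct blocks are incident with either 0 or q^{f−2} common points, and D is G-pairwise transitive. -/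
/-!
Hyperplanes of `V = K^f` are the coatoms of its subspace lattice. Duality identifies them with the
points of the projective space of `V*`, and those through `v ≠ 0` with the hyperplanes of
`V ⧸ K ∙ v`; this gives the number of blocks through two points. Affine hyperplanes with equal
directions coincide or are disjoint, and with different directions they meet in a coset of the
intersection of the directions.

Each configuration in the definition of pairwise transitivity is, up to translation, described by
a basis adapted to it in which one vector may be rescaled without changing the configuration. The
linear map sending one adapted basis to another, with that vector rescaled to make the
determinant `1`, lies in `SL(f, q)`; composed with translations it is the required element of `G`.
-/

def IsAffineHyperplane (K : Type*) [Field K] (f : ℕ) (s : Set (Fin f → K)) : Prop :=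
  ∃ (W : Submodule K (Fin f → K)) (x : Fin f → K),
    Module.finrank K W = f - 1 ∧ s = {y : Fin f → K | ∃ w ∈ W, y = x + w}

open Module Submodule
open scoped LinearAlgebra.Projectivization

section Hyperplanes

variable {K V : Type*} [Field K] [AddCommGroup V] [Module K V]

theorem Submodule.isCoatom_iff_finrank_add_one [FiniteDimensional K V] {W : Submodule K V} :
    IsCoatom W ↔ finrank K W + 1 = finrank K V := by
  constructor
  · intro hW
    obtain ⟨x, -, hx⟩ := SetLike.exists_of_lt hW.lt_top
    have hx0 : x ≠ 0 := fun h => hx (h ▸ W.zero_mem)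
    rw [← finrank_add_eq_of_isCompl (isCompl_span_singleton_of_isCoatom_of_notMem hW hx),
      finrank_span_singleton hx0]
  · intro h
    refine ⟨fun htop => by rw [htop, finrank_top] at h; omega, fun U hU => ?_⟩
    have := finrank_lt_finrank_of_lt hU
    exact eq_top_of_finrank_eq (le_antisymm (finrank_le U) (by omega))

theorem Submodule.exists_isCoatom_notMem [FiniteDimensional K V] {v : V} (hv : v ≠ 0) :
    ∃ W : Submodule K V, IsCoatom W ∧ v ∉ W := by
  obtain ⟨φ, hφ⟩ : ∃ φ : Dual K V, φ v ≠ 0 := by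
    by_contra! h
    exact hv ((forall_dual_apply_eq_zero_iff K v).mp h)
  exact ⟨LinearMap.ker φ, LinearMap.isCoatom_ker_of_surjective
    (LinearMap.surjective_of_ne_zero fun h => hφ (by simp [h])), hφ⟩

theorem Submodule.finrank_inf_add_two_of_isCoatom [FiniteDimensional K V] {W₁ W₂ : Submodule K V}
    (h₁ : IsCoatom W₁) (h₂ : IsCoatom W₂) (hne : W₁ ≠ W₂) :
    finrank K ↥(W₁ ⊓ W₂) + 2 = finrank K V := by
  have := finrank_sup_add_finrank_inf_eq W₁ W₂
  rw [h₁.sup_eq_top_of_ne h₂ hne, finrank_top] at this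
  have := isCoatom_iff_finrank_add_one.mp h₁
  have := isCoatom_iff_finrank_add_one.mp h₂
  omega

theorem Submodule.span_singleton_sup_inf_eq_of_isCoatom {W₁ W₂ : Submodule K V}
    (h₁ : IsCoatom W₁) (h₂ : IsCoatom W₂) {w : V} (hw₁ : w ∈ W₁) (hw₂ : w ∉ W₂) :
    K ∙ w ⊔ W₁ ⊓ W₂ = W₁ := by
  have hcov : W₁ ⊓ W₂ ⋖ W₁ := by
    refine inf_covBy_of_covBy_sup_right ?_
    rw [h₁.sup_eq_top_of_ne h₂ (fun h => hw₂ (h ▸ hw₁)), covBy_top_iff]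
    exact h₂
  refine (hcov.eq_or_eq le_sup_right (sup_le ?_ inf_le_left)).resolve_left fun h => ?_
  · exact (span_singleton_le_iff_mem _ _).mpr hw₁
  · have : w ∈ W₁ ⊓ W₂ := h ▸ mem_sup_left (mem_span_singleton_self w)
    exact hw₂ this.2

end Hyperplanes

section Counting

variable {K V : Type*} [Field K] [AddCommGroup V] [Module K V] [FiniteDimensional K V]

noncomputable def coatomEquivProjectivizationDual :
    {W : Submodule K V // IsCoatom W} ≃ ℙ K (Dual K V) :=
  (Equiv.subtypeEquiv (Subspace.orderIsoFiniteDimensional.toEquiv.trans OrderDual.ofDual)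
      (q := fun L : Submodule K (Dual K V) => IsAtom L)
      fun W => by rw [← Subspace.orderIsoFiniteDimensional.isCoatom_iff W]; rfl).trans <|
    (Equiv.subtypeEquivRight fun _ => isAtom_iff_finrank_eq_one).trans
      (Projectivization.equivSubmodule K (Dual K V)).symm

theorem Submodule.natCard_isCoatom [Finite K] :
    Nat.card {W : Submodule K V // IsCoatom W} =
      (Nat.card K ^ finrank K V - 1) / (Nat.card K - 1) := by
  rw [Nat.card_congr coatomEquivProjectivizationDual, Projectivization.card'',
    natCard_eq_pow_finrank (K := K), Subspace.dual_finrank_eq]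

noncomputable def coatomQuotientEquiv (v : V) :
    {W : Submodule K (V ⧸ K ∙ v) // IsCoatom W} ≃ {W : Submodule K V // IsCoatom W ∧ v ∈ W} :=
  (Equiv.subtypeEquiv (comapMkQRelIso (K ∙ v)).toEquiv fun W => by
      rw [← (comapMkQRelIso (K ∙ v)).isCoatom_iff W]
      exact ⟨fun h => h.of_isCoatom_coe_Ici, fun h => h.Ici _⟩).trans <|
    (Equiv.subtypeSubtypeEquivSubtypeInter _ _).trans <|
      Equiv.subtypeEquivRight fun W => by rw [Set.mem_Ici, span_singleton_le_iff_mem, and_comm]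

theorem Submodule.natCard_isCoatom_mem [Finite K] {v : V} (hv : v ≠ 0) :
    Nat.card {W : Submodule K V // IsCoatom W ∧ v ∈ W} =
      (Nat.card K ^ (finrank K V - 1) - 1) / (Nat.card K - 1) := by
  have := (K ∙ v).finrank_quotient_add_finrank
  rw [finrank_span_singleton hv] at this
  rw [← Nat.card_congr (coatomQuotientEquiv v), natCard_isCoatom, ← this, Nat.add_sub_cancel]

end Counting

section AdaptedBases

variable {K V : Type*} [Field K] [AddCommGroup V] [Module K V]

theorem Submodule.span_range_coe_basis {ι : Type*} {N : Submodule K V} (bN : Basis ι K N) :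
    span K (Set.range fun i => (bN i : V)) = N := by
  rw [show (fun i => (bN i : V)) = N.subtype ∘ bN from rfl, Set.range_comp, span_image,
    bN.span_eq, map_subtype_top]

theorem Submodule.span_image_range_succ_eq {n : ℕ} {W : Submodule K V} (b : Fin (n + 1) → V)
    (bW : Basis (Fin n) K W) (hb : ∀ i, b i.succ = bW i) :
    span K (b '' Set.range Fin.succ) = W := by
  rw [← Set.range_comp, ← span_range_coe_basis bW]
  exact congrArg _ (congrArg _ (funext hb))

theorem Module.Basis.exists_finCons_of_le_sup {n : ℕ} {N O : Submodule K V}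
    (bN : Basis (Fin n) K N) (hNO : N ≤ O) {y : V} (hyO : y ∈ O) (hyN : y ∉ N)
    (hO : O ≤ K ∙ y ⊔ N) :
    ∃ b : Basis (Fin (n + 1)) K O, (b 0 : V) = y ∧ ∀ i, (b i.succ : V) = bN i := by
  refine ⟨Basis.mkFinConsOfLE y hyO bN hNO (fun c x hx h => ?_) (fun z hz => ?_), ?_, fun i => ?_⟩
  · by_contra hc
    refine hyN ?_
    rw [← inv_smul_smul₀ hc y, eq_neg_of_add_eq_zero_left h]
    exact N.smul_mem _ (N.neg_mem hx)
  · obtain ⟨u, hu, m, hm, rfl⟩ := mem_sup.mp (hO hz)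
    obtain ⟨a, rfl⟩ := mem_span_singleton.mp hu
    exact ⟨-a, by simpa [add_comm, add_assoc] using hm⟩
  · simp [coe_mkFinConsOfLE]
  · simp [coe_mkFinConsOfLE]

theorem Module.Basis.exists_cons_of_isCoatom {n : ℕ} {W : Submodule K V} (hW : IsCoatom W)
    (bW : Basis (Fin n) K W) {x : V} (hx : x ∉ W) :
    ∃ b : Basis (Fin (n + 1)) K V, b 0 = x ∧ ∀ i, b i.succ = bW i := by
  obtain ⟨b, hb0, hbs⟩ := bW.exists_finCons_of_le_sup le_top mem_top hx
    (by rw [sup_comm, (isCompl_span_singleton_of_isCoatom_of_notMem hW hx).sup_eq_top])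
  exact ⟨b.map (LinearEquiv.ofTop ⊤ rfl), hb0, hbs⟩

theorem Module.Basis.exists_span_image_eq_of_isCoatom_of_ne {n : ℕ} {W₁ W₂ : Submodule K V}
    (h₁ : IsCoatom W₁) (h₂ : IsCoatom W₂) (hne : W₁ ≠ W₂) (bI : Basis (Fin n) K ↥(W₁ ⊓ W₂)) :
    ∃ b : Basis (Fin (n + 2)) K V,
      span K (b '' insert 0 (Set.range (Fin.succ ∘ Fin.succ))) = W₁ ∧
      span K (b '' Set.range Fin.succ) = W₂ := by
  obtain ⟨w₁, hw₁, hw₁'⟩ := SetLike.not_le_iff_exists.mp fun h =>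
    hne (h₁.le_iff.mp h |>.resolve_left h₂.1).symm
  obtain ⟨w₂, hw₂, hw₂'⟩ := SetLike.not_le_iff_exists.mp fun h =>
    hne (h₂.le_iff.mp h |>.resolve_left h₁.1)
  obtain ⟨b₂, -, hb₂s⟩ := bI.exists_finCons_of_le_sup inf_le_right hw₂ (fun h => hw₂' h.1)
    (by rw [inf_comm, span_singleton_sup_inf_eq_of_isCoatom h₂ h₁ hw₂ hw₂'])
  obtain ⟨b, hb0, hbs⟩ := b₂.exists_cons_of_isCoatom h₂ hw₁'
  refine ⟨b, ?_, span_image_range_succ_eq b b₂ hbs⟩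
  rw [Set.image_insert_eq, span_insert, hb0, Set.range_comp, ← Set.image_comp,
    span_image_range_succ_eq (b ∘ Fin.succ) bI (fun i => by simp [hbs, hb₂s])]
  exact span_singleton_sup_inf_eq_of_isCoatom h₁ h₂ hw₁ hw₁'

theorem Module.Basis.span_image_unitsSMul {ι : Type*} (c : Basis ι K V) (w : ι → Kˣ)
    (S : Set ι) : span K (c.unitsSMul w '' S) = span K (c '' S) := by
  ext v
  have : ((c.unitsSMul w).repr v).support = (c.repr v).support := by
    ext i
    simp [repr_unitsSMul, Units.smul_def]
  rw [mem_span_image, mem_span_image, this]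

theorem Module.Basis.exists_det_eq_one_map_span_image {ι : Type*} [Fintype ι] [DecidableEq ι]
    (b c : Basis ι K V) (i₀ : ι) :
    ∃ e : V ≃ₗ[K] V, LinearMap.det (e : V →ₗ[K] V) = 1 ∧ (∀ i ≠ i₀, e (b i) = c i) ∧
      ∀ S : Set ι, (span K (b '' S)).map (e : V →ₗ[K] V) = span K (c '' S) := by
  -- Rescaling `c i₀` by `(b.det c)⁻¹` makes the determinant `1` and changes no span `c '' S`.
  set u := (b.isUnit_det c).unit
  set w : ι → Kˣ := Pi.mulSingle i₀ u⁻¹ with hw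
  set c' := c.unitsSMul w
  have hc' : ∀ i, b.equiv c' (Equiv.refl ι) (b i) = c' i := fun i => by simp
  refine ⟨b.equiv c' (Equiv.refl ι), ?_, fun i hi => ?_, fun S => ?_⟩
  · have : ⇑c' = fun i => (w i : K) • c i :=
      funext fun i => by rw [unitsSMul_apply, Units.smul_def]
    have hprod : ∏ i, w i = u⁻¹ := by simp [w]
    rw [det_basis, this, AlternatingMap.map_smul_univ, ← Units.coe_prod, hprod, smul_eq_mul,
      ← IsUnit.unit_spec (b.isUnit_det c), Units.inv_mul]
  · rw [hc', unitsSMul_apply, hw, Pi.mulSingle_eq_of_ne hi, one_smul]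
  · rw [map_span, ← Set.image_comp, ← span_image_unitsSMul c w]
    congr 2
    exact funext hc'

end AdaptedBases

section SpecialLinear

variable {K V : Type*} [Field K] [AddCommGroup V] [Module K V] [FiniteDimensional K V]

theorem LinearEquiv.exists_det_eq_one_map_eq_apply_eq (hV : 2 ≤ finrank K V)
    {W W' : Submodule K V} (hW : IsCoatom W) (hW' : IsCoatom W') {x x' : V} (hx : x ∉ W)
    (hx' : x' ∉ W') :
    ∃ e : V ≃ₗ[K] V, LinearMap.det (e : V →ₗ[K] V) = 1 ∧ W.map (e : V →ₗ[K] V) = W' ∧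
      e x = x' := by
  have hWV := isCoatom_iff_finrank_add_one.mp hW
  have hW'V := isCoatom_iff_finrank_add_one.mp hW'
  obtain ⟨b, hb0, hbs⟩ := (finBasisOfFinrankEq K W rfl).exists_cons_of_isCoatom hW hx
  obtain ⟨c, hc0, hcs⟩ :=
    (finBasisOfFinrankEq K W' (n := finrank K W) (by omega)).exists_cons_of_isCoatom hW' hx'
  -- the rescaled vector is taken in `W`, which is nonzero since `2 ≤ finrank K V`
  obtain ⟨e, hdet, he, hspan⟩ := b.exists_det_eq_one_map_span_image c (Fin.succ ⟨0, by omega⟩)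
  refine ⟨e, hdet, ?_, ?_⟩
  · rw [← span_image_range_succ_eq b _ hbs, hspan, span_image_range_succ_eq c _ hcs]
  · rw [← hb0, ← hc0]
    exact he 0 (Fin.succ_ne_zero _).symm

theorem LinearEquiv.exists_det_eq_one_map_eq_map_eq {W₁ W₂ U₁ U₂ : Submodule K V}
    (hW₁ : IsCoatom W₁) (hW₂ : IsCoatom W₂) (hW : W₁ ≠ W₂) (hU₁ : IsCoatom U₁)
    (hU₂ : IsCoatom U₂) (hU : U₁ ≠ U₂) :
    ∃ e : V ≃ₗ[K] V, LinearMap.det (e : V →ₗ[K] V) = 1 ∧ W₁.map (e : V →ₗ[K] V) = U₁ ∧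
      W₂.map (e : V →ₗ[K] V) = U₂ := by
  have hWU := (finrank_inf_add_two_of_isCoatom hW₁ hW₂ hW).trans
    (finrank_inf_add_two_of_isCoatom hU₁ hU₂ hU).symm
  obtain ⟨b, hb₁, hb₂⟩ :=
    (finBasisOfFinrankEq K _ rfl).exists_span_image_eq_of_isCoatom_of_ne hW₁ hW₂ hW
  obtain ⟨c, hc₁, hc₂⟩ := (finBasisOfFinrankEq K _ (n := finrank K ↥(W₁ ⊓ W₂))
    (by omega)).exists_span_image_eq_of_isCoatom_of_ne hU₁ hU₂ hU
  obtain ⟨e, hdet, -, hspan⟩ := b.exists_det_eq_one_map_span_image c 0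
  exact ⟨e, hdet, by rw [← hb₁, hspan, hc₁], by rw [← hb₂, hspan, hc₂]⟩

end SpecialLinear

section AffineSubspaces

open AffineSubspace

variable {K V : Type*} [Field K] [AddCommGroup V] [Module K V]

theorem AffineSubspace.mk'_eq_mk'_of_mem {a p : V} {W : Submodule K V} (h : p ∈ mk' a W) :
    mk' p W = mk' a W := by
  simpa only [direction_mk'] using mk'_eq h

theorem AffineSubspace.natCard_mk' [Finite K] [FiniteDimensional K V] (x : V)
    (W : Submodule K V) : Nat.card (mk' x W) = Nat.card K ^ finrank K W := by
  rw [← natCard_eq_pow_finrank]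
  exact Nat.card_congr <| (Equiv.subRight x).subtypeEquiv fun y => by simp [mem_mk']

theorem AffineSubspace.exists_coe_mk'_inter_coe_mk' {W₁ W₂ : Submodule K V} (h : W₁ ⊔ W₂ = ⊤)
    (a₁ a₂ : V) :
    ∃ p, (mk' a₁ W₁ : Set V) ∩ mk' a₂ W₂ = ((mk' p (W₁ ⊓ W₂) : AffineSubspace K V) : Set V) := by
  obtain ⟨p, hp₁, hp₂⟩ := inter_nonempty_of_nonempty_of_sup_direction_eq_top
    (mk'_nonempty a₁ W₁) (mk'_nonempty a₂ W₂) (by rwa [direction_mk', direction_mk'])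
  refine ⟨p, ?_⟩
  rw [← mk'_eq_mk'_of_mem hp₁, ← mk'_eq_mk'_of_mem hp₂]
  ext
  simp [mem_mk']

theorem AffineSubspace.eq_of_isCoatom_of_inter_eq_empty {W₁ W₂ : Submodule K V}
    (h₁ : IsCoatom W₁) (h₂ : IsCoatom W₂) {a₁ a₂ : V}
    (h : (mk' a₁ W₁ : Set V) ∩ mk' a₂ W₂ = ∅) : W₁ = W₂ := by
  by_contra hne
  obtain ⟨p, hp⟩ := exists_coe_mk'_inter_coe_mk' (h₁.sup_eq_top_of_ne h₂ hne) a₁ a₂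
  exact (mk'_nonempty p _).ne_empty (hp ▸ h)

theorem AffineSubspace.image_mk'_of_apply_eq {g : V → V} {e : V →ₗ[K] V} {p q : V}
    (hg : ∀ x, g x = e (x - p) + q) (x : V) (W : Submodule K V) :
    g '' mk' x W = mk' (g x) (W.map e) := by
  let φ : V →ᵃ[K] V := AffineMap.mk' g e x fun y => by
    rw [vsub_eq_sub, vadd_eq_add, hg, hg, ← add_assoc, ← map_add, sub_add_sub_cancel]
  exact congrArg ((↑) : AffineSubspace K V → Set V) (map_mk' φ x W)

end AffineSubspaces

def IsHyperplaneCoset (K : Type*) {V : Type*} [Field K] [AddCommGroup V] [Module K V]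
    (s : Set V) : Prop :=
  ∃ (W : Submodule K V) (x : V), IsCoatom W ∧ s = AffineSubspace.mk' x W

section HyperplaneCosets

open AffineSubspace

variable {K V : Type*} [Field K] [AddCommGroup V] [Module K V]

theorem isHyperplaneCoset_mk' {W : Submodule K V} (hW : IsCoatom W) (x : V) :
    IsHyperplaneCoset K (mk' x W : Set V) :=
  ⟨W, x, hW, rfl⟩

theorem IsHyperplaneCoset.exists_eq_mk'_of_mem {s : Set V} (hs : IsHyperplaneCoset K s) {p : V}
    (hp : p ∈ s) : ∃ W : Submodule K V, IsCoatom W ∧ s = mk' p W := by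
  obtain ⟨W, x, hW, rfl⟩ := hs
  exact ⟨W, hW, by rw [mk'_eq_mk'_of_mem hp]⟩

variable [Finite K] [FiniteDimensional K V]

theorem natCard_isHyperplaneCoset_ne_zero (hV : 0 < finrank K V) :
    Nat.card {s : Set V // IsHyperplaneCoset K s} ≠ 0 := by
  have := Module.finite_of_finite K (M := V)
  obtain ⟨v, hv⟩ := (finrank_pos_iff_exists_ne_zero (R := K)).mp hV
  obtain ⟨W, hW, -⟩ := exists_isCoatom_notMem (K := K) hv
  exact Nat.card_ne_zero.mpr ⟨⟨⟨_, isHyperplaneCoset_mk' hW 0⟩⟩, inferInstance⟩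

theorem IsHyperplaneCoset.natCard_eq {s : Set V} (hs : IsHyperplaneCoset K s) :
    Nat.card s = Nat.card K ^ (finrank K V - 1) := by
  obtain ⟨W, x, hW, rfl⟩ := hs
  rw [← isCoatom_iff_finrank_add_one.mp hW, Nat.add_sub_cancel]
  exact natCard_mk' x W

theorem natCard_isHyperplaneCoset_mem_mem {x y : V} (hxy : x ≠ y) :
    Nat.card {s : Set V // IsHyperplaneCoset K s ∧ x ∈ s ∧ y ∈ s} =
      (Nat.card K ^ (finrank K V - 1) - 1) / (Nat.card K - 1) := by
  rw [← natCard_isCoatom_mem (sub_ne_zero.mpr hxy.symm)]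
  refine (Nat.card_congr (Equiv.ofBijective (fun W => ⟨mk' x W.1,
    isHyperplaneCoset_mk' W.2.1 x, self_mem_mk' x W.1, mem_mk'.mpr W.2.2⟩) ⟨?_, ?_⟩)).symm
  · intro W W' h
    have := congrArg direction (SetLike.coe_injective (congrArg Subtype.val h))
    rwa [direction_mk', direction_mk', ← Subtype.ext_iff] at this
  · rintro ⟨s, hs, hx, hy⟩
    obtain ⟨W, hW, rfl⟩ := hs.exists_eq_mk'_of_mem hx
    exact ⟨⟨W, hW, mem_mk'.mp hy⟩, rfl⟩

theorem IsHyperplaneCoset.natCard_inter {s t : Set V} (hs : IsHyperplaneCoset K s)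
    (ht : IsHyperplaneCoset K t) (hst : s ≠ t) :
    Nat.card ↥(s ∩ t) = 0 ∨ Nat.card ↥(s ∩ t) = Nat.card K ^ (finrank K V - 2) := by
  obtain ⟨W₁, a₁, hW₁, rfl⟩ := hs
  obtain ⟨W₂, a₂, hW₂, rfl⟩ := ht
  by_cases hW : W₁ = W₂
  · subst hW
    left
    rw [Set.eq_empty_of_forall_notMem (s := (mk' a₁ W₁ : Set V) ∩ mk' a₂ W₁) fun p hp =>
      hst (by rw [← mk'_eq_mk'_of_mem hp.1, ← mk'_eq_mk'_of_mem hp.2])]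
    simp
  · right
    obtain ⟨p, hp⟩ := exists_coe_mk'_inter_coe_mk' (hW₁.sup_eq_top_of_ne hW₂ hW) a₁ a₂
    rw [hp, ← finrank_inf_add_two_of_isCoatom hW₁ hW₂ hW, Nat.add_sub_cancel]
    exact natCard_mk' p _

end HyperplaneCosets

section Transitivity

open AffineSubspace

variable {K V : Type*} [Field K] [AddCommGroup V] [Module K V] {G : Subgroup (Equiv.Perm V)}

theorem exists_mem_apply_eq_of_det_eq_one (htrans : ∀ v : V, Equiv.addRight v ∈ G)
    (hSL : ∀ e : V ≃ₗ[K] V, LinearMap.det (e : V →ₗ[K] V) = 1 → e.toEquiv ∈ G)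
    {e : V ≃ₗ[K] V} (he : LinearMap.det (e : V →ₗ[K] V) = 1) (p q : V) :
    ∃ g ∈ G, ∀ x, g x = e (x - p) + q :=
  ⟨Equiv.addRight q * e.toEquiv * Equiv.addRight (-p),
    G.mul_mem (G.mul_mem (htrans q) (hSL e he)) (htrans (-p)), fun x => by simp [sub_eq_add_neg]⟩

variable [FiniteDimensional K V]

theorem exists_mem_image_mk'_eq_of_notMem (hV : 2 ≤ finrank K V)
    (htrans : ∀ v : V, Equiv.addRight v ∈ G)
    (hSL : ∀ e : V ≃ₗ[K] V, LinearMap.det (e : V →ₗ[K] V) = 1 → e.toEquiv ∈ G)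
    {W W' : Submodule K V} (hW : IsCoatom W) (hW' : IsCoatom W') {x x' : V} (hx : x ∉ W)
    (hx' : x' ∉ W') (p q : V) :
    ∃ g ∈ G, g p = q ∧ g (p + x) = q + x' ∧ ∀ y, g '' mk' y W = mk' (g y) W' := by
  obtain ⟨e, he, hWW', hxx'⟩ := LinearEquiv.exists_det_eq_one_map_eq_apply_eq hV hW hW' hx hx'
  obtain ⟨g, hg, hgp⟩ := exists_mem_apply_eq_of_det_eq_one htrans hSL he p q
  refine ⟨g, hg, by simp [hgp], by simp [hgp, hxx', add_comm], fun y => ?_⟩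
  rw [image_mk'_of_apply_eq hgp, hWW']

theorem exists_mem_apply_eq_apply_eq (hV : 2 ≤ finrank K V)
    (htrans : ∀ v : V, Equiv.addRight v ∈ G)
    (hSL : ∀ e : V ≃ₗ[K] V, LinearMap.det (e : V →ₗ[K] V) = 1 → e.toEquiv ∈ G)
    {p₁ p₂ q₁ q₂ : V} (hp : p₁ ≠ p₂) (hq : q₁ ≠ q₂) : ∃ g ∈ G, g p₁ = q₁ ∧ g p₂ = q₂ := by
  obtain ⟨W, hW, hpW⟩ := exists_isCoatom_notMem (K := K) (sub_ne_zero.mpr hp.symm)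
  obtain ⟨W', hW', hqW'⟩ := exists_isCoatom_notMem (K := K) (sub_ne_zero.mpr hq.symm)
  obtain ⟨g, hg, hg₁, hg₂, -⟩ :=
    exists_mem_image_mk'_eq_of_notMem hV htrans hSL hW hW' hpW hqW' p₁ q₁
  exact ⟨g, hg, hg₁, by simpa using hg₂⟩

theorem IsHyperplaneCoset.exists_mem_apply_eq_image_eq_of_mem (hV : 2 ≤ finrank K V)
    (htrans : ∀ v : V, Equiv.addRight v ∈ G)
    (hSL : ∀ e : V ≃ₗ[K] V, LinearMap.det (e : V →ₗ[K] V) = 1 → e.toEquiv ∈ G)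
    {s t : Set V} (hs : IsHyperplaneCoset K s) (ht : IsHyperplaneCoset K t) {p q : V}
    (hp : p ∈ s) (hq : q ∈ t) : ∃ g ∈ G, g p = q ∧ g '' s = t := by
  obtain ⟨W, hW, rfl⟩ := hs.exists_eq_mk'_of_mem hp
  obtain ⟨W', hW', rfl⟩ := ht.exists_eq_mk'_of_mem hq
  obtain ⟨x, -, hx⟩ := SetLike.exists_of_lt hW.lt_top
  obtain ⟨x', -, hx'⟩ := SetLike.exists_of_lt hW'.lt_top
  obtain ⟨g, hg, hgp, -, himage⟩ :=
    exists_mem_image_mk'_eq_of_notMem hV htrans hSL hW hW' hx hx' p q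
  exact ⟨g, hg, hgp, by rw [himage, hgp]⟩

theorem IsHyperplaneCoset.exists_mem_apply_eq_image_eq_of_notMem (hV : 2 ≤ finrank K V)
    (htrans : ∀ v : V, Equiv.addRight v ∈ G)
    (hSL : ∀ e : V ≃ₗ[K] V, LinearMap.det (e : V →ₗ[K] V) = 1 → e.toEquiv ∈ G)
    {s t : Set V} (hs : IsHyperplaneCoset K s) (ht : IsHyperplaneCoset K t) {p q : V}
    (hp : p ∉ s) (hq : q ∉ t) : ∃ g ∈ G, g p = q ∧ g '' s = t := by
  obtain ⟨W, a, hW, rfl⟩ := hs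
  obtain ⟨W', b, hW', rfl⟩ := ht
  have hx : a - p ∉ W := fun h => hp (mem_mk'.mpr (by simpa using W.neg_mem h))
  have hx' : b - q ∉ W' := fun h => hq (mem_mk'.mpr (by simpa using W'.neg_mem h))
  obtain ⟨g, hg, hgp, hga, himage⟩ :=
    exists_mem_image_mk'_eq_of_notMem hV htrans hSL hW hW' hx hx' p q
  rw [add_sub_cancel, add_sub_cancel] at hga
  exact ⟨g, hg, hgp, by rw [himage, hga]⟩

theorem IsHyperplaneCoset.exists_mem_image_eq_image_eq_of_inter_nonempty
    (htrans : ∀ v : V, Equiv.addRight v ∈ G)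
    (hSL : ∀ e : V ≃ₗ[K] V, LinearMap.det (e : V →ₗ[K] V) = 1 → e.toEquiv ∈ G)
    {s₁ s₂ t₁ t₂ : Set V} (hs₁ : IsHyperplaneCoset K s₁) (hs₂ : IsHyperplaneCoset K s₂)
    (ht₁ : IsHyperplaneCoset K t₁) (ht₂ : IsHyperplaneCoset K t₂) (hs : s₁ ≠ s₂) (ht : t₁ ≠ t₂)
    (hsn : (s₁ ∩ s₂).Nonempty) (htn : (t₁ ∩ t₂).Nonempty) :
    ∃ g ∈ G, g '' s₁ = t₁ ∧ g '' s₂ = t₂ := by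
  obtain ⟨p, hp₁, hp₂⟩ := hsn
  obtain ⟨q, hq₁, hq₂⟩ := htn
  obtain ⟨W₁, hW₁, rfl⟩ := hs₁.exists_eq_mk'_of_mem hp₁
  obtain ⟨W₂, hW₂, rfl⟩ := hs₂.exists_eq_mk'_of_mem hp₂
  obtain ⟨U₁, hU₁, rfl⟩ := ht₁.exists_eq_mk'_of_mem hq₁
  obtain ⟨U₂, hU₂, rfl⟩ := ht₂.exists_eq_mk'_of_mem hq₂
  obtain ⟨e, he, h₁, h₂⟩ := LinearEquiv.exists_det_eq_one_map_eq_map_eq hW₁ hW₂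
    (fun h => hs (h ▸ rfl)) hU₁ hU₂ (fun h => ht (h ▸ rfl))
  obtain ⟨g, hg, hgp⟩ := exists_mem_apply_eq_of_det_eq_one htrans hSL he p q
  have hgpq : g p = q := by simp [hgp]
  exact ⟨g, hg, by rw [image_mk'_of_apply_eq hgp, h₁, hgpq],
    by rw [image_mk'_of_apply_eq hgp, h₂, hgpq]⟩

theorem IsHyperplaneCoset.exists_mem_image_eq_image_eq_of_inter_eq_empty (hV : 2 ≤ finrank K V)
    (htrans : ∀ v : V, Equiv.addRight v ∈ G)
    (hSL : ∀ e : V ≃ₗ[K] V, LinearMap.det (e : V →ₗ[K] V) = 1 → e.toEquiv ∈ G)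
    {s₁ s₂ t₁ t₂ : Set V} (hs₁ : IsHyperplaneCoset K s₁) (hs₂ : IsHyperplaneCoset K s₂)
    (ht₁ : IsHyperplaneCoset K t₁) (ht₂ : IsHyperplaneCoset K t₂) (hs : s₁ ∩ s₂ = ∅)
    (ht : t₁ ∩ t₂ = ∅) : ∃ g ∈ G, g '' s₁ = t₁ ∧ g '' s₂ = t₂ := by
  obtain ⟨W, a₁, hW, rfl⟩ := hs₁
  obtain ⟨W₂, a₂, hW₂, rfl⟩ := hs₂
  obtain ⟨U, b₁, hU, rfl⟩ := ht₁
  obtain ⟨U₂, b₂, hU₂, rfl⟩ := ht₂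
  obtain rfl := eq_of_isCoatom_of_inter_eq_empty hW hW₂ hs
  obtain rfl := eq_of_isCoatom_of_inter_eq_empty hU hU₂ ht
  have hx : a₂ - a₁ ∉ W := fun h => hs.subset ⟨mem_mk'.mpr h, self_mem_mk' a₂ W⟩
  have hx' : b₂ - b₁ ∉ U := fun h => ht.subset ⟨mem_mk'.mpr h, self_mem_mk' b₂ U⟩
  obtain ⟨g, hg, hga₁, hga₂, himage⟩ :=
    exists_mem_image_mk'_eq_of_notMem hV htrans hSL hW hU hx hx' a₁ b₁
  rw [add_sub_cancel, add_sub_cancel] at hga₂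
  exact ⟨g, hg, by rw [himage, hga₁], by rw [himage, hga₂]⟩

end Transitivity

theorem isAffineHyperplane_eq {K : Type*} [Field K] {f : ℕ} (hf : f ≠ 0) :
    IsAffineHyperplane K f = IsHyperplaneCoset K := by
  have hW (W : Submodule K (Fin f → K)) : finrank K W = f - 1 ↔ IsCoatom W := by
    rw [isCoatom_iff_finrank_add_one, finrank_fin_fun]
    omega
  have hx (x : Fin f → K) (W : Submodule K (Fin f → K)) :
      {y | ∃ w ∈ W, y = x + w} = (AffineSubspace.mk' x W : Set (Fin f → K)) := by
    ext y
    simp [AffineSubspace.mem_mk', ← sub_eq_iff_eq_add']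
  ext s
  simp only [IsAffineHyperplane, IsHyperplaneCoset, hW, hx]

theorem affine_design_pairwise_transitive_general
    {K : Type*} [Field K] [Fintype K] (f : ℕ) (hf : 2 ≤ f)
    (hq : 3 ≤ Fintype.card K ^ (f - 1))
    (G : Subgroup (Equiv.Perm (Fin f → K)))
    (htrans : ∀ x : Fin f → K, Equiv.addRight x ∈ G)
    (hSL : ∀ e : (Fin f → K) ≃ₗ[K] (Fin f → K),
      LinearMap.det (e : (Fin f → K) →ₗ[K] (Fin f → K)) = 1 → e.toEquiv ∈ G) :
    -- `D` is a non-trivial 2-design with the stated parameters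
    (Nat.card {s : Set (Fin f → K) // IsAffineHyperplane K f s} ≠ 0 ∧
     Nat.card (Fin f → K) = Fintype.card K ^ f ∧
     (∀ s : Set (Fin f → K), IsAffineHyperplane K f s →
        Nat.card ↥s = Fintype.card K ^ (f - 1)) ∧
     (∀ x y : Fin f → K, x ≠ y →
        Nat.card {s : Set (Fin f → K) // IsAffineHyperplane K f s ∧ x ∈ s ∧ y ∈ s} =
          (Fintype.card K ^ (f - 1) - 1) / (Fintype.card K - 1)) ∧
     2 < Fintype.card K ^ (f - 1) ∧ Fintype.card K ^ (f - 1) < Fintype.card K ^ f) ∧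
    -- two distinct blocks meet in `0` or `q^{f-2}` points
    (∀ s t : Set (Fin f → K), IsAffineHyperplane K f s → IsAffineHyperplane K f t →
      s ≠ t → Nat.card ↥(s ∩ t) = 0 ∨ Nat.card ↥(s ∩ t) = Fintype.card K ^ (f - 2)) ∧
    -- `D` is `G`-pairwise transitive
    (∀ p₁ p₂ q₁ q₂ : Fin f → K, p₁ ≠ p₂ → q₁ ≠ q₂ →
      ∃ g ∈ G, g p₁ = q₁ ∧ g p₂ = q₂) ∧
    (∀ (p q : Fin f → K) (s t : Set (Fin f → K)),
      IsAffineHyperplane K f s → IsAffineHyperplane K f t → p ∈ s → q ∈ t →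
      ∃ g ∈ G, g p = q ∧ g '' s = t) ∧
    (∀ (p q : Fin f → K) (s t : Set (Fin f → K)),
      IsAffineHyperplane K f s → IsAffineHyperplane K f t → p ∉ s → q ∉ t →
      ∃ g ∈ G, g p = q ∧ g '' s = t) ∧
    (∀ s₁ s₂ t₁ t₂ : Set (Fin f → K),
      IsAffineHyperplane K f s₁ → IsAffineHyperplane K f s₂ →
      IsAffineHyperplane K f t₁ → IsAffineHyperplane K f t₂ →
      s₁ ≠ s₂ → t₁ ≠ t₂ → (s₁ ∩ s₂).Nonempty → (t₁ ∩ t₂).Nonempty →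
      ∃ g ∈ G, g '' s₁ = t₁ ∧ g '' s₂ = t₂) ∧
    (∀ s₁ s₂ t₁ t₂ : Set (Fin f → K),
      IsAffineHyperplane K f s₁ → IsAffineHyperplane K f s₂ →
      IsAffineHyperplane K f t₁ → IsAffineHyperplane K f t₂ →
      s₁ ∩ s₂ = ∅ → t₁ ∩ t₂ = ∅ →
      ∃ g ∈ G, g '' s₁ = t₁ ∧ g '' s₂ = t₂) := by
  have hV : finrank K (Fin f → K) = f := finrank_fin_fun K
  have hV2 : 2 ≤ finrank K (Fin f → K) := hV.symm ▸ hf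
  rw [isAffineHyperplane_eq (by omega)]
  rw [← Nat.card_eq_fintype_card] at hq ⊢
  refine ⟨⟨natCard_isHyperplaneCoset_ne_zero (by omega), by simp, fun s hs => ?_,
    fun x y hxy => ?_, by omega, Nat.pow_lt_pow_right Finite.one_lt_card (by omega)⟩,
    fun s t hs ht hst => ?_, fun _ _ _ _ => exists_mem_apply_eq_apply_eq hV2 htrans hSL,
    fun _ _ _ _ hs ht => hs.exists_mem_apply_eq_image_eq_of_mem hV2 htrans hSL ht,
    fun _ _ _ _ hs ht => hs.exists_mem_apply_eq_image_eq_of_notMem hV2 htrans hSL ht,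
    fun _ _ _ _ hs₁ hs₂ ht₁ ht₂ => hs₁.exists_mem_image_eq_image_eq_of_inter_nonempty htrans hSL
      hs₂ ht₁ ht₂,
    fun _ _ _ _ hs₁ hs₂ ht₁ ht₂ => hs₁.exists_mem_image_eq_image_eq_of_inter_eq_empty hV2
      htrans hSL hs₂ ht₁ ht₂⟩
  · rw [hs.natCard_eq, hV]
  · rw [natCard_isHyperplaneCoset_mem_mem hxy, hV]
  · simpa only [hV] using hs.natCard_inter ht hst

/-- The design of points and affine hyperplanes of `AG(f,q)` is a non-trivial
2-(q^f, q^{f-1}, (q^{f-1}-1)/(q-1)) design, two distinct blocks meet in `0` or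
`q^{f-2}` points, and the design is `G`-pairwise transitive for any group `G` of
permutations of `K^f` mapping affine hyperplanes to affine hyperplanes and
containing all translations and all linear maps of determinant 1. -/
theorem affine_design_pairwise_transitive
    {K : Type*} [Field K] [Fintype K] (f : ℕ) (hf : 2 ≤ f)
    (hq : 3 ≤ Fintype.card K ^ (f - 1))
    (G : Subgroup (Equiv.Perm (Fin f → K)))
    (hmap : ∀ g ∈ G, ∀ s : Set (Fin f → K),
      IsAffineHyperplane K f s → IsAffineHyperplane K f (g '' s))
    (htrans : ∀ x : Fin f → K, Equiv.addRight x ∈ G)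
    (hSL : ∀ e : (Fin f → K) ≃ₗ[K] (Fin f → K),
      LinearMap.det (e : (Fin f → K) →ₗ[K] (Fin f → K)) = 1 → e.toEquiv ∈ G) :
    -- `D` is a non-trivial 2-design with the stated parameters
    (Nat.card {s : Set (Fin f → K) // IsAffineHyperplane K f s} ≠ 0 ∧
     Nat.card (Fin f → K) = Fintype.card K ^ f ∧
     (∀ s : Set (Fin f → K), IsAffineHyperplane K f s →
        Nat.card ↥s = Fintype.card K ^ (f - 1)) ∧
     (∀ x y : Fin f → K, x ≠ y →
        Nat.card {s : Set (Fin f → K) // IsAffineHyperplane K f s ∧ x ∈ s ∧ y ∈ s} =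
          (Fintype.card K ^ (f - 1) - 1) / (Fintype.card K - 1)) ∧
     2 < Fintype.card K ^ (f - 1) ∧ Fintype.card K ^ (f - 1) < Fintype.card K ^ f) ∧
    -- two distinct blocks meet in `0` or `q^{f-2}` points
    (∀ s t : Set (Fin f → K), IsAffineHyperplane K f s → IsAffineHyperplane K f t →
      s ≠ t → Nat.card ↥(s ∩ t) = 0 ∨ Nat.card ↥(s ∩ t) = Fintype.card K ^ (f - 2)) ∧
    -- `D` is `G`-pairwise transitive
    (∀ p₁ p₂ q₁ q₂ : Fin f → K, p₁ ≠ p₂ → q₁ ≠ q₂ →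
      ∃ g ∈ G, g p₁ = q₁ ∧ g p₂ = q₂) ∧
    (∀ (p q : Fin f → K) (s t : Set (Fin f → K)),
      IsAffineHyperplane K f s → IsAffineHyperplane K f t → p ∈ s → q ∈ t →
      ∃ g ∈ G, g p = q ∧ g '' s = t) ∧
    (∀ (p q : Fin f → K) (s t : Set (Fin f → K)),
      IsAffineHyperplane K f s → IsAffineHyperplane K f t → p ∉ s → q ∉ t →
      ∃ g ∈ G, g p = q ∧ g '' s = t) ∧
    (∀ s₁ s₂ t₁ t₂ : Set (Fin f → K),
      IsAffineHyperplane K f s₁ → IsAffineHyperplane K f s₂ →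
      IsAffineHyperplane K f t₁ → IsAffineHyperplane K f t₂ →
      s₁ ≠ s₂ → t₁ ≠ t₂ → (s₁ ∩ s₂).Nonempty → (t₁ ∩ t₂).Nonempty →
      ∃ g ∈ G, g '' s₁ = t₁ ∧ g '' s₂ = t₂) ∧
    (∀ s₁ s₂ t₁ t₂ : Set (Fin f → K),
      IsAffineHyperplane K f s₁ → IsAffineHyperplane K f s₂ →
      IsAffineHyperplane K f t₁ → IsAffineHyperplane K f t₂ →
      s₁ ∩ s₂ = ∅ → t₁ ∩ t₂ = ∅ →
      ∃ g ∈ G, g '' s₁ = t₁ ∧ g '' s₂ = t₂) :=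
  affine_design_pairwise_transitive_general f hf hq G htrans hSL
end

section
/- Let q be a prime power, d ≥ 4, and K = GF(q). Let P be the set of 1-dimensional K-subspaces of K^d, let B be the set of 2-dimensional K-subspaces of K^d, with inclusion as incidence, and let H be any subgroup of GL(d,K) containing SL(d,K), acting on P and B in the natural way. Then D = (P,B,⊆) is a non-trivial 2-((q^d−1)/(q−1), q+1, 1) design, any two distinct blocks are incident with at most one common point and some pair of blocks is incident with no common point, and D is H-pairwise transitive. -/
/-!
The design parameters are the point counts of projective spaces (`Projectivization.card''`)
plus dimension arithmetic for `⊔` and `⊓`. Each pairwise-transitivity condition is about pairs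
of subspaces `(A, B)` with prescribed `dim A`, `dim B` and `dim (A ⊓ B)`, and these three numbers
determine the `SL(V)`-orbit of the pair: a basis of `A ⊓ B` extended by bases of complements of
`A ⊓ B` in `A` and in `B` is linearly independent, two such families (for the same dimensions)
extend to bases that some automorphism of `V` matches up, and rescaling one vector of the target
basis makes the determinant `1` without moving the span of any set of basis vectors.
-/

open Module Submodule Set
open scoped LinearAlgebra.Projectivization

section

variable {K V : Type*} [Field K] [AddCommGroup V] [Module K V]

theorem Module.Basis.sumExtend_inl {ι : Type*} {v : ι → V} (hv : LinearIndependent K v)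
    (i : ι) : Basis.sumExtend hv (Sum.inl i) = v i := by
  simp only [Basis.sumExtend, Basis.reindex_apply, Basis.coe_extend]
  rfl

theorem span_image_units_smul {ι : Type*} (u : ι → Kˣ) (w : ι → V) (s : Set ι) :
    span K ((fun i => u i • w i) '' s) = span K (w '' s) := by
  refine le_antisymm (span_le.mpr ?_) (span_le.mpr ?_)
  · rintro _ ⟨i, hi, rfl⟩
    exact smul_mem _ _ (subset_span (mem_image_of_mem w hi))
  · rintro _ ⟨i, hi, rfl⟩
    rw [← inv_smul_smul (u i) (w i)]
    exact smul_mem _ _ (subset_span (mem_image_of_mem _ hi))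

theorem Module.Basis.exists_det_unitsSMul_eq_one {J : Type*} [Fintype J] [DecidableEq J]
    (b c : Basis J K V) : ∃ u : J → Kˣ, b.det (c.unitsSMul u) = 1 := by
  suffices h : ∃ u : J → Kˣ, b.det c * ∏ j, (u j : K) = 1 by
    obtain ⟨u, hu⟩ := h
    exact ⟨u, by rw [← b.det_mul_det c, Basis.det_unitsSMul_self, hu]⟩
  rcases isEmpty_or_nonempty J with hJ | ⟨⟨j₀⟩⟩
  · exact ⟨1, by simp⟩
  · refine ⟨Pi.mulSingle j₀ (b.isUnit_det c).unit⁻¹, ?_⟩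
    simp [← Units.coe_prod, (b.isUnit_det c).ne_zero]

theorem exists_finrank_eq_one_le_inf_iff {A B : Submodule K V} :
    (∃ W : Submodule K V, finrank K W = 1 ∧ W ≤ A ∧ W ≤ B) ↔ A ⊓ B ≠ ⊥ := by
  refine ⟨fun ⟨W, hW, hWA, hWB⟩ hAB => ?_, fun h => ?_⟩
  · have hW0 : W = ⊥ := le_bot_iff.mp (hAB ▸ le_inf hWA hWB)
    rw [hW0, finrank_bot] at hW
    exact zero_ne_one hW
  · obtain ⟨x, hx, hx0⟩ := exists_mem_ne_zero_of_ne_bot h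
    exact ⟨K ∙ x, finrank_span_singleton hx0,
      le_inf_iff.mp ((span_singleton_le_iff_mem x _).mpr hx)⟩

section FiniteDimensional

variable [FiniteDimensional K V]

theorem Module.Basis.nonempty_sumExtendIndex_equiv {ι : Type*} {v w : ι → V}
    (hv : LinearIndependent K v) (hw : LinearIndependent K w) :
    Nonempty (Basis.sumExtendIndex hv ≃ Basis.sumExtendIndex hw) := by
  have := Module.Finite.finite_basis (Basis.sumExtend hv)
  have := Module.Finite.finite_basis (Basis.sumExtend hw)
  have := Finite.sum_left (α := ι) (Basis.sumExtendIndex hv)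
  have := Finite.sum_right ι (β := Basis.sumExtendIndex hv)
  have := Finite.sum_right ι (β := Basis.sumExtendIndex hw)
  rw [← Finite.card_eq]
  have h := (finrank_eq_nat_card_basis (Basis.sumExtend hv)).symm.trans
    (finrank_eq_nat_card_basis (Basis.sumExtend hw))
  rw [Nat.card_sum, Nat.card_sum] at h
  omega

theorem exists_det_eq_one_map_span_image {ι : Type*} {v w : ι → V}
    (hv : LinearIndependent K v) (hw : LinearIndependent K w) :
    ∃ e : V ≃ₗ[K] V, LinearMap.det (e : V →ₗ[K] V) = 1 ∧
      ∀ s : Set ι, (span K (v '' s)).map (e : V →ₗ[K] V) = span K (w '' s) := by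
  classical
  obtain ⟨σ⟩ := Basis.nonempty_sumExtendIndex_equiv hv hw
  let b := Basis.sumExtend hv
  let c := (Basis.sumExtend hw).reindex (Equiv.sumCongr (Equiv.refl ι) σ.symm)
  have := Module.Finite.finite_basis b
  have := Fintype.ofFinite (ι ⊕ Basis.sumExtendIndex hv)
  have hc (i : ι) : c (Sum.inl i) = w i := by
    simp [c, Basis.sumExtend_inl]
  obtain ⟨u, hu⟩ := b.exists_det_unitsSMul_eq_one c
  refine ⟨b.equiv (c.unitsSMul u) (Equiv.refl _), by rwa [Basis.det_basis], fun s => ?_⟩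
  have he : ⇑(b.equiv (c.unitsSMul u) (Equiv.refl _)) ∘ v = fun i => u (Sum.inl i) • w i := by
    ext i
    simp [← Basis.sumExtend_inl hv i, b, Basis.unitsSMul_apply, hc]
  rw [map_span, LinearEquiv.coe_coe, ← image_comp, he, span_image_units_smul]

theorem exists_linearIndependent_span_range_eq (A : Submodule K V) {n : ℕ}
    (h : finrank K A = n) :
    ∃ v : Fin n → V, LinearIndependent K v ∧ span K (range v) = A := by
  let b := finBasisOfFinrankEq K A h
  refine ⟨A.subtype ∘ b, b.linearIndependent.map' _ A.ker_subtype, ?_⟩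
  rw [range_comp, ← map_span, b.span_eq, map_subtype_top]

theorem exists_linearIndependent_span_image_eq {A B : Submodule K V} {i m n : ℕ}
    (hI : finrank K ↥(A ⊓ B) = i) (hA : finrank K A = i + m) (hB : finrank K B = i + n) :
    ∃ v : (Fin i ⊕ Fin m) ⊕ Fin n → V, LinearIndependent K v ∧
      span K (v '' range Sum.inl) = A ∧
      span K (v '' (range (Sum.inl ∘ Sum.inl) ∪ range Sum.inr)) = B := by
  obtain ⟨C, hIC, hA'⟩ := IsModularLattice.exists_disjoint_and_sup_eq (inf_le_left (b := B))
  obtain ⟨D, hID, hB'⟩ := IsModularLattice.exists_disjoint_and_sup_eq (inf_le_right (a := A))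
  have hC : finrank K C = m := by
    have := finrank_sup_add_finrank_inf_eq (A ⊓ B) C
    rw [hA', hIC.eq_bot, finrank_bot, hA, hI] at this
    omega
  have hD : finrank K D = n := by
    have := finrank_sup_add_finrank_inf_eq (A ⊓ B) D
    rw [hB', hID.eq_bot, finrank_bot, hB, hI] at this
    omega
  have hAD : Disjoint A D := by
    rw [disjoint_iff, ← inf_eq_right.mpr (hB' ▸ le_sup_right : D ≤ B), ← inf_assoc]
    exact hID.eq_bot
  obtain ⟨x, hx, hxs⟩ := exists_linearIndependent_span_range_eq (A ⊓ B) hI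
  obtain ⟨y, hy, hys⟩ := exists_linearIndependent_span_range_eq C hC
  obtain ⟨z, hz, hzs⟩ := exists_linearIndependent_span_range_eq D hD
  have hxy : span K (range (Sum.elim x y)) = A := by
    rw [Sum.elim_range, span_union, hxs, hys, hA']
  refine ⟨Sum.elim (Sum.elim x y) z,
    (hx.sum_type hy (hxs ▸ hys ▸ hIC)).sum_type hz (hxy ▸ hzs ▸ hAD), ?_, ?_⟩
  · rw [← range_comp, Sum.elim_comp_inl, hxy]
  · rw [image_union, ← range_comp, ← range_comp, span_union, ← Function.comp_assoc,
      Sum.elim_comp_inl, Sum.elim_comp_inl, Sum.elim_comp_inr, hxs, hzs, hB']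

theorem exists_mem_map_eq_map_eq {H : Subgroup (V ≃ₗ[K] V)}
    (hSL : ∀ e : V ≃ₗ[K] V, LinearMap.det (e : V →ₗ[K] V) = 1 → e ∈ H)
    {A B A' B' : Submodule K V} (hA : finrank K A = finrank K A')
    (hB : finrank K B = finrank K B') (hAB : finrank K ↥(A ⊓ B) = finrank K ↥(A' ⊓ B')) :
    ∃ e ∈ H, A.map (e : V →ₗ[K] V) = A' ∧ B.map (e : V →ₗ[K] V) = B' := by
  obtain ⟨m, hm⟩ := Nat.exists_eq_add_of_le (finrank_mono (inf_le_left : A ⊓ B ≤ A))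
  obtain ⟨n, hn⟩ := Nat.exists_eq_add_of_le (finrank_mono (inf_le_right : A ⊓ B ≤ B))
  obtain ⟨v, hv, hvA, hvB⟩ := exists_linearIndependent_span_image_eq rfl hm hn
  obtain ⟨w, hw, hwA, hwB⟩ := exists_linearIndependent_span_image_eq hAB.symm
    (hA ▸ hm) (hB ▸ hn)
  obtain ⟨e, he, hmap⟩ := exists_det_eq_one_map_span_image hv hw
  exact ⟨e, hSL e he, by rw [← hvA, hmap, hwA], by rw [← hvB, hmap, hwB]⟩

theorem finrank_inf_lt_left_of_ne {A B : Submodule K V} (h : finrank K A = finrank K B)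
    (hne : A ≠ B) : finrank K ↥(A ⊓ B) < finrank K A :=
  finrank_lt_finrank_of_lt (inf_lt_left.mpr fun hAB => hne (eq_of_le_of_finrank_eq hAB h))

theorem finrank_sup_eq_two {W W' : Submodule K V} (hW : finrank K W = 1) (hW' : finrank K W' = 1)
    (hne : W ≠ W') : finrank K ↥(W ⊔ W') = 2 := by
  have := finrank_sup_add_finrank_inf_eq W W'
  have := finrank_inf_lt_left_of_ne (hW.trans hW'.symm) hne
  omega

theorem card_finrank_eq_two_containing_eq_one {W W' : Submodule K V} (hW : finrank K W = 1)
    (hW' : finrank K W' = 1) (hne : W ≠ W') :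
    Nat.card {L : Submodule K V // finrank K L = 2 ∧ W ≤ L ∧ W' ≤ L} = 1 := by
  have hsup := finrank_sup_eq_two hW hW' hne
  refine Nat.card_eq_one_iff_exists.mpr ⟨⟨W ⊔ W', hsup, le_sup_left, le_sup_right⟩, ?_⟩
  rintro ⟨L, hL, hWL, hW'L⟩
  exact Subtype.ext (eq_of_le_of_finrank_eq (sup_le hWL hW'L) (hsup.trans hL.symm)).symm

theorem card_finrank_eq_one_contained_le_one {L L' : Submodule K V} (hL : finrank K L = 2)
    (hL' : finrank K L' = 2) (hne : L ≠ L') :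
    Nat.card {W : Submodule K V // finrank K W = 1 ∧ W ≤ L ∧ W ≤ L'} ≤ 1 := by
  have : Subsingleton {W : Submodule K V // finrank K W = 1 ∧ W ≤ L ∧ W ≤ L'} := by
    refine ⟨fun ⟨W, hW, hWL, hWL'⟩ ⟨W', hW', hW'L, hW'L'⟩ => Subtype.ext ?_⟩
    by_contra hWW'
    have := finrank_mono (sup_le (le_inf hWL hWL') (le_inf hW'L hW'L'))
    have := finrank_inf_lt_left_of_ne (hL.trans hL'.symm) hne
    rw [finrank_sup_eq_two hW hW' hWW'] at *
    omega
  exact Finite.card_le_one_iff_subsingleton.mpr this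

theorem finrank_inf_eq_one_of_ne {L L' : Submodule K V} (hL : finrank K L = 2)
    (hL' : finrank K L' = 2) (hne : L ≠ L') (hmeet : L ⊓ L' ≠ ⊥) :
    finrank K ↥(L ⊓ L') = 1 := by
  have := finrank_inf_lt_left_of_ne (hL.trans hL'.symm) hne
  have := Submodule.finrank_eq_zero.not.mpr hmeet
  omega

theorem exists_finrank_eq_two_inf_eq_bot (h : 4 ≤ finrank K V) :
    ∃ L L' : Submodule K V, finrank K L = 2 ∧ finrank K L' = 2 ∧ L ⊓ L' = ⊥ := by
  let f : Fin 2 ⊕ Fin 2 → V := finBasis K V ∘ Fin.castLE h ∘ finSumFinEquiv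
  have hf : LinearIndependent K f := (finBasis K V).linearIndependent.comp _
    ((Fin.castLE_injective h).comp finSumFinEquiv.injective)
  obtain ⟨hl, hr, hdisj⟩ := linearIndependent_sum.mp hf
  exact ⟨_, _, (finrank_span_eq_card hl).trans (Fintype.card_fin 2),
    (finrank_span_eq_card hr).trans (Fintype.card_fin 2), disjoint_iff.mp hdisj⟩

end FiniteDimensional

theorem card_finrank_eq_one [Finite K] :
    Nat.card {W : Submodule K V // finrank K W = 1} = (Nat.card V - 1) / (Nat.card K - 1) :=
  (Nat.card_congr (Projectivization.equivSubmodule K V)).symm.trans (Projectivization.card'' K V)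

theorem card_finrank_eq_one_le_eq_card_projectivization (L : Submodule K V) :
    Nat.card {W : Submodule K V // finrank K W = 1 ∧ W ≤ L} = Nat.card (ℙ K L) := by
  rw [Nat.card_congr (Projectivization.equivSubmodule K L)]
  refine Nat.card_congr ((Equiv.subtypeEquiv (MapSubtype.orderIso L).toEquiv fun W => ?_).trans
    ((Equiv.subtypeSubtypeEquivSubtypeInter _ _).trans
      (Equiv.subtypeEquivRight fun _ => and_comm))).symm
  exact (finrank_map_subtype_eq L W).symm ▸ Iff.rfl

end

theorem Nat.add_one_lt_geom_div {q d : ℕ} (hq : 2 ≤ q) (hd : 3 ≤ d) :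
    q + 1 < (q ^ d - 1) / (q - 1) := by
  rw [← Nat.geomSum_eq hq]
  calc q + 1 = ∑ i ∈ Finset.range 2, q ^ i := by simp
    _ < ∑ i ∈ Finset.range d, q ^ i :=
      Finset.sum_lt_sum_of_subset (Finset.range_subset_range.mpr (by omega))
        (Finset.mem_range.mpr (by omega : 2 < d)) (by simp) (by positivity) (by simp)

/-- The design of points (1-dimensional subspaces) and lines (2-dimensional
subspaces) of `PG(d-1,q)`, `d ≥ 4`, is a non-trivial
2-((q^d-1)/(q-1), q+1, 1) design, two distinct blocks are incident with at most one
common point, some two blocks have no common point, and the design is `H`-pairwise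
transitive for any subgroup `H` of `GL(d,K)` containing all the linear automorphisms
of determinant 1 (i.e. containing `SL(d,K)`). -/
theorem projective_lines_design_pairwise_transitive
    {K : Type*} [Field K] [Fintype K] (d : ℕ) (hd : 4 ≤ d)
    (H : Subgroup ((Fin d → K) ≃ₗ[K] (Fin d → K)))
    (hSL : ∀ e : (Fin d → K) ≃ₗ[K] (Fin d → K),
      LinearMap.det (e : (Fin d → K) →ₗ[K] (Fin d → K)) = 1 → e ∈ H) :
    -- non-trivial 2-design with parameters ((q^d-1)/(q-1), q+1, 1)
    (Nat.card {W : Submodule K (Fin d → K) // Module.finrank K W = 1} =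
        (Fintype.card K ^ d - 1) / (Fintype.card K - 1) ∧
     (∀ L : Submodule K (Fin d → K), Module.finrank K L = 2 →
        Nat.card {W : Submodule K (Fin d → K) // Module.finrank K W = 1 ∧ W ≤ L} =
          Fintype.card K + 1) ∧
     (∀ W W' : Submodule K (Fin d → K), Module.finrank K W = 1 → Module.finrank K W' = 1 →
        W ≠ W' →
        Nat.card {L : Submodule K (Fin d → K) //
          Module.finrank K L = 2 ∧ W ≤ L ∧ W' ≤ L} = 1) ∧
     2 < Fintype.card K + 1 ∧
     Fintype.card K + 1 < (Fintype.card K ^ d - 1) / (Fintype.card K - 1)) ∧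
    -- two distinct blocks share at most one point, and some two blocks are disjoint
    (∀ L L' : Submodule K (Fin d → K), Module.finrank K L = 2 → Module.finrank K L' = 2 →
      L ≠ L' →
      Nat.card {W : Submodule K (Fin d → K) //
        Module.finrank K W = 1 ∧ W ≤ L ∧ W ≤ L'} ≤ 1) ∧
    (∃ L L' : Submodule K (Fin d → K), Module.finrank K L = 2 ∧ Module.finrank K L' = 2 ∧
      ¬ ∃ W : Submodule K (Fin d → K), Module.finrank K W = 1 ∧ W ≤ L ∧ W ≤ L') ∧
    -- `H`-pairwise transitivity
    (∀ W₁ W₂ U₁ U₂ : Submodule K (Fin d → K),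
      Module.finrank K W₁ = 1 → Module.finrank K W₂ = 1 →
      Module.finrank K U₁ = 1 → Module.finrank K U₂ = 1 → W₁ ≠ W₂ → U₁ ≠ U₂ →
      ∃ e ∈ H, W₁.map (e : (Fin d → K) →ₗ[K] (Fin d → K)) = U₁ ∧
        W₂.map (e : (Fin d → K) →ₗ[K] (Fin d → K)) = U₂) ∧
    (∀ W U L M : Submodule K (Fin d → K),
      Module.finrank K W = 1 → Module.finrank K U = 1 →
      Module.finrank K L = 2 → Module.finrank K M = 2 → W ≤ L → U ≤ M →
      ∃ e ∈ H, W.map (e : (Fin d → K) →ₗ[K] (Fin d → K)) = U ∧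
        L.map (e : (Fin d → K) →ₗ[K] (Fin d → K)) = M) ∧
    (∀ W U L M : Submodule K (Fin d → K),
      Module.finrank K W = 1 → Module.finrank K U = 1 →
      Module.finrank K L = 2 → Module.finrank K M = 2 → ¬ W ≤ L → ¬ U ≤ M →
      ∃ e ∈ H, W.map (e : (Fin d → K) →ₗ[K] (Fin d → K)) = U ∧
        L.map (e : (Fin d → K) →ₗ[K] (Fin d → K)) = M) ∧
    (∀ L₁ L₂ M₁ M₂ : Submodule K (Fin d → K),
      Module.finrank K L₁ = 2 → Module.finrank K L₂ = 2 →
      Module.finrank K M₁ = 2 → Module.finrank K M₂ = 2 → L₁ ≠ L₂ → M₁ ≠ M₂ →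
      (∃ W : Submodule K (Fin d → K), Module.finrank K W = 1 ∧ W ≤ L₁ ∧ W ≤ L₂) →
      (∃ W : Submodule K (Fin d → K), Module.finrank K W = 1 ∧ W ≤ M₁ ∧ W ≤ M₂) →
      ∃ e ∈ H, L₁.map (e : (Fin d → K) →ₗ[K] (Fin d → K)) = M₁ ∧
        L₂.map (e : (Fin d → K) →ₗ[K] (Fin d → K)) = M₂) ∧
    (∀ L₁ L₂ M₁ M₂ : Submodule K (Fin d → K),
      Module.finrank K L₁ = 2 → Module.finrank K L₂ = 2 →
      Module.finrank K M₁ = 2 → Module.finrank K M₂ = 2 →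
      (¬ ∃ W : Submodule K (Fin d → K), Module.finrank K W = 1 ∧ W ≤ L₁ ∧ W ≤ L₂) →
      (¬ ∃ W : Submodule K (Fin d → K), Module.finrank K W = 1 ∧ W ≤ M₁ ∧ W ≤ M₂) →
      ∃ e ∈ H, L₁.map (e : (Fin d → K) →ₗ[K] (Fin d → K)) = M₁ ∧
        L₂.map (e : (Fin d → K) →ₗ[K] (Fin d → K)) = M₂) := by
  have hq : 2 ≤ Fintype.card K := Fintype.one_lt_card
  have hV : finrank K (Fin d → K) = d := finrank_fin_fun K
  refine ⟨⟨?_, fun L hL => ?_, fun W W' => card_finrank_eq_two_containing_eq_one, by omega,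
    Nat.add_one_lt_geom_div hq (by omega)⟩, fun L L' => card_finrank_eq_one_contained_le_one,
    ?_, ?_, ?_, ?_, ?_, ?_⟩
  · rw [card_finrank_eq_one, Nat.card_fun, Nat.card_fin, Nat.card_eq_fintype_card]
  · rw [card_finrank_eq_one_le_eq_card_projectivization,
      Projectivization.card_of_finrank_two K L hL, Nat.card_eq_fintype_card]
  · obtain ⟨L, L', hL, hL', hLL'⟩ := exists_finrank_eq_two_inf_eq_bot (hV ▸ hd)
    exact ⟨L, L', hL, hL', by rw [exists_finrank_eq_one_le_inf_iff, hLL', ne_eq, not_not]⟩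
  · intro W₁ W₂ U₁ U₂ hW₁ hW₂ hU₁ hU₂ hW hU
    have := finrank_inf_lt_left_of_ne (hW₁.trans hW₂.symm) hW
    have := finrank_inf_lt_left_of_ne (hU₁.trans hU₂.symm) hU
    exact exists_mem_map_eq_map_eq hSL (hW₁.trans hU₁.symm) (hW₂.trans hU₂.symm) (by omega)
  · intro W U L M hW hU hL hM hWL hUM
    exact exists_mem_map_eq_map_eq hSL (hW.trans hU.symm) (hL.trans hM.symm)
      (by rw [inf_eq_left.mpr hWL, inf_eq_left.mpr hUM, hW, hU])
  · intro W U L M hW hU hL hM hWL hUM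
    have := finrank_lt_finrank_of_lt (inf_lt_left.mpr hWL)
    have := finrank_lt_finrank_of_lt (inf_lt_left.mpr hUM)
    exact exists_mem_map_eq_map_eq hSL (hW.trans hU.symm) (hL.trans hM.symm) (by omega)
  · intro L₁ L₂ M₁ M₂ hL₁ hL₂ hM₁ hM₂ hL hM hLmeet hMmeet
    rw [exists_finrank_eq_one_le_inf_iff] at hLmeet hMmeet
    exact exists_mem_map_eq_map_eq hSL (hL₁.trans hM₁.symm) (hL₂.trans hM₂.symm)
      (by rw [finrank_inf_eq_one_of_ne hL₁ hL₂ hL hLmeet,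
        finrank_inf_eq_one_of_ne hM₁ hM₂ hM hMmeet])
  · intro L₁ L₂ M₁ M₂ hL₁ hL₂ hM₁ hM₂ hL hM
    rw [exists_finrank_eq_one_le_inf_iff, ne_eq, not_not] at hL hM
    exact exists_mem_map_eq_map_eq hSL (hL₁.trans hM₁.symm) (hL₂.trans hM₂.symm) (by rw [hL, hM])
end
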